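/- arXiv:1301.5197 — 6 statements merged into one kernel-verified Lean document; each statement's English description precedes it below -/
import Mathlib

section
/- If u and v are words over an alphabet Σ and there exists n ≥ 0 such that u^n and v^n have a common factor of length at least |u| + |v| - gcd(|u|,|v|), then the primitive roots of u and v are conjugate words. -/
/-- `wpow u k` is the word `u` concatenated `k` times, i.e. `u ^ k`. -/
def wpow {α : Type*} (u : List α) : ℕ → List α
  | 0 => []
  | k + 1 => u ++ wpow u k

/-- Two words are conjugate if one is a cyclic permutation of the other. -/
def WordConj {α : Type*} (u v : List α) : Prop := ∃ x y, u = x ++ y ∧ v = y ++ x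

/-- `r` is the primitive root of `u` : a shortest word `w` with `u = w ^ k`, `k ≥ 1`. -/
def IsPrimRoot {α : Type*} (r u : List α) : Prop :=
  (∃ k, 1 ≤ k ∧ u = wpow r k) ∧ ∀ w k, 1 ≤ k → u = wpow w k → r.length ≤ w.length

section FWaux

variable {α β : Type*}

theorem wpow_length (u : List α) : ∀ k, (wpow u k).length = k * u.length
  | 0 => by simp [wpow]
  | k + 1 => by
    simp only [wpow, List.length_append, wpow_length u k, Nat.succ_mul]
    ring

theorem wpow_nil : ∀ k, wpow ([] : List α) k = []
  | 0 => rfl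
  | k + 1 => by simp [wpow, wpow_nil k]

theorem wpow_one (u : List α) : wpow u 1 = u := by simp [wpow]

theorem wpow_add (u : List α) (a b : ℕ) : wpow u (a + b) = wpow u a ++ wpow u b := by
  induction a with
  | zero => simp [wpow]
  | succ a ih => rw [Nat.succ_add]; simp [wpow, ih]

theorem wpow_mul (u : List α) (a b : ℕ) : wpow (wpow u a) b = wpow u (a * b) := by
  induction b with
  | zero => simp [wpow]
  | succ b ih => rw [wpow, ih, Nat.mul_succ, Nat.add_comm, wpow_add]

theorem wpow_getElem? (u : List α) :
    ∀ k i, i < k * u.length → (wpow u k)[i]? = u[i % u.length]?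
  | 0, i, h => by omega
  | k + 1, i, h => by
    by_cases hi : i < u.length
    · rw [wpow, List.getElem?_append_left hi, Nat.mod_eq_of_lt hi]
    · have hle : u.length ≤ i := le_of_not_gt hi
      have hlt : i - u.length < k * u.length := by
        have : (k + 1) * u.length = k * u.length + u.length := by ring
        omega
      rw [wpow, List.getElem?_append_right hle, wpow_getElem? u k _ hlt]
      congr 1
      conv_rhs => rw [← Nat.sub_add_cancel hle]
      rw [Nat.add_mod_right]

theorem mod_period (F : ℕ → β) (p L : ℕ) (hp : 0 < p)
    (hper : ∀ i, i + p < L → F (i + p) = F i) :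
    ∀ i, i < L → F i = F (i % p) := by
  intro i
  induction i using Nat.strong_induction_on with
  | _ i IH =>
    intro hi
    by_cases h : i < p
    · rw [Nat.mod_eq_of_lt h]
    · have hle : p ≤ i := le_of_not_gt h
      have h1 : F (i - p + p) = F (i - p) := hper _ (by omega)
      rw [Nat.sub_add_cancel hle] at h1
      rw [h1, IH (i - p) (by omega) (by omega)]
      congr 1
      conv_rhs => rw [← Nat.sub_add_cancel hle]
      rw [Nat.add_mod_right]

theorem fw_aux : ∀ N : ℕ, ∀ p q L : ℕ, ∀ F : ℕ → β, p + q ≤ N → 0 < p → 0 < q → p ≤ q →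
    p + q - Nat.gcd p q ≤ L →
    (∀ i, i + p < L → F (i + p) = F i) →
    (∀ i, i + q < L → F (i + q) = F i) →
    ∀ i, i < L → F i = F (i % Nat.gcd p q) := by
  intro N
  induction N with
  | zero => intro p q L F hN hp; omega
  | succ N IH =>
    intro p q L F hN hp hq hpq hL hP hQ
    rcases eq_or_lt_of_le hpq with rfl | hlt
    · rw [Nat.gcd_self]
      exact mod_period F p L hp hP
    · set g := Nat.gcd p q with hgdef
      have hgp : g ∣ p := Nat.gcd_dvd_left p q
      have hgq : g ∣ q := Nat.gcd_dvd_right p q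
      have hg0 : 0 < g := Nat.gcd_pos_of_pos_left q hp
      have hgle_p : g ≤ p := Nat.le_of_dvd hp hgp
      have hgqp : g ∣ q - p := Nat.dvd_sub hgq hgp
      have hqp0 : 0 < q - p := by omega
      have hgle_qp : g ≤ q - p := Nat.le_of_dvd hqp0 hgqp
      have hg' : Nat.gcd p (q - p) = g := Nat.gcd_sub_self_right (le_of_lt hlt)
      set L' := L - p with hL'def
      have hP' : ∀ i, i + p < L' → F (i + p) = F i := fun i h => hP i (by omega)
      have hQ' : ∀ i, i + (q - p) < L' → F (i + (q - p)) = F i := by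
        intro i h
        have h1 : F (i + (q - p) + p) = F (i + (q - p)) := hP _ (by omega)
        have h2 : i + (q - p) + p = i + q := by omega
        rw [h2] at h1
        rw [← h1]
        exact hQ i (by omega)
      have hL'' : p + (q - p) - Nat.gcd p (q - p) ≤ L' := by rw [hg']; omega
      have key : ∀ i, i < L' → F i = F (i % g) := by
        rcases le_total p (q - p) with ho | ho
        · have := IH p (q - p) L' F (by omega) hp hqp0 ho hL'' hP' hQ'
          rwa [hg'] at this
        · have hg'' : Nat.gcd (q - p) p = g := by rw [Nat.gcd_comm]; exact hg'
          have := IH (q - p) p L' F (by omega) hqp0 hp ho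
            (by rw [hg'']; omega) hQ' hP'
          rwa [hg''] at this
      intro i
      induction i using Nat.strong_induction_on with
      | _ i IH2 =>
        intro hi
        by_cases hi' : i < L'
        · exact key i hi'
        · have hpi : p ≤ i := by omega
          have h1 : F (i - p + p) = F (i - p) := hP _ (by omega)
          rw [Nat.sub_add_cancel hpi] at h1
          rw [h1, IH2 (i - p) (by omega) (by omega)]
          congr 1
          conv_rhs => rw [← Nat.sub_add_cancel hpi]
          obtain ⟨c, hc⟩ := hgp
          rw [hc, Nat.add_mul_mod_self_left]

theorem fine_wilf {p q L : ℕ} {F : ℕ → β} (hp : 0 < p) (hq : 0 < q)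
    (hL : p + q - Nat.gcd p q ≤ L)
    (hP : ∀ i, i + p < L → F (i + p) = F i)
    (hQ : ∀ i, i + q < L → F (i + q) = F i) :
    ∀ i, i < L → F i = F (i % Nat.gcd p q) := by
  rcases le_total p q with h | h
  · exact fw_aux (p + q) p q L F le_rfl hp hq h hL hP hQ
  · have hg : Nat.gcd q p = Nat.gcd p q := Nat.gcd_comm q p
    have := fw_aux (q + p) q p L F le_rfl hq hp h (by rw [hg]; omega) hQ hP
    intro i hi
    rw [this i hi, hg]

theorem pow_of_mod (w : List α) (g : ℕ) (hg : 0 < g) (hgle : g ≤ w.length)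
    (hdvd : g ∣ w.length) (h : ∀ i, i < w.length → w[i]? = w[i % g]?) :
    w = wpow (w.take g) (w.length / g) := by
  have htl : (w.take g).length = g := by
    rw [List.length_take]; omega
  apply List.ext_getElem?
  intro i
  by_cases hi : i < w.length
  · rw [wpow_getElem? _ _ i (by rw [htl, Nat.div_mul_cancel hdvd]; exact hi), htl,
      List.getElem?_take_of_lt (Nat.mod_lt _ hg)]
    exact h i hi
  · rw [List.getElem?_eq_none (by omega),
      List.getElem?_eq_none (by rw [wpow_length, htl, Nat.div_mul_cancel hdvd]; omega)]

theorem factor_spec {u f : List α} {n : ℕ} (h : f <:+: wpow u n) :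
    ∃ s, ∀ i, i < f.length → f[i]? = u[(s + i) % u.length]? := by
  obtain ⟨x, y, hxy⟩ := h
  refine ⟨x.length, fun i hi => ?_⟩
  have hlen : x.length + (f.length + y.length) = n * u.length := by
    have := congrArg List.length hxy
    simpa [wpow_length] using this
  have hidx : x.length + i < n * u.length := by omega
  have h2 : x ++ (f ++ y) = wpow u n := by rw [← List.append_assoc]; exact hxy
  have h1 : (x ++ (f ++ y))[x.length + i]? = f[i]? := by
    rw [List.getElem?_append_right (Nat.le_add_right _ _), Nat.add_sub_cancel_left,
      List.getElem?_append_left hi]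
  rw [← h1, h2, wpow_getElem? u n _ hidx]

theorem factor_period {u f : List α} {n : ℕ} (h : f <:+: wpow u n) :
    ∀ i, i + u.length < f.length → f[i + u.length]? = f[i]? := by
  obtain ⟨s, hs⟩ := factor_spec h
  intro i hi
  rw [hs _ hi, hs i (by omega)]
  congr 1
  rw [← Nat.add_assoc, Nat.add_mod_right]

theorem conj_take {u f : List α} {n : ℕ} (h : f <:+: wpow u n)
    (hp : u.length ≤ f.length) : ∃ m, u.rotate m = f.take u.length := by
  obtain ⟨s, hs⟩ := factor_spec h
  refine ⟨s, ?_⟩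
  apply List.ext_getElem?
  intro i
  by_cases hi : i < u.length
  · rw [List.getElem?_rotate hi, List.getElem?_take_of_lt hi, hs i (by omega),
      Nat.add_comm]
  · rw [List.getElem?_eq_none (by rw [List.length_rotate]; omega),
      List.getElem?_eq_none (by rw [List.length_take]; omega)]

theorem wpow_rotate (r : List α) (k s : ℕ) :
    (wpow r k).rotate s = wpow (r.rotate s) k := by
  rcases eq_or_ne r [] with rfl | hr
  · simp [wpow_nil]
  have hr0 : 0 < r.length := List.length_pos_iff.mpr hr
  apply List.ext_getElem?
  intro i
  have hlen : (wpow r k).length = k * r.length := wpow_length r k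
  by_cases hi : i < k * r.length
  · rw [List.getElem?_rotate (by rw [hlen]; exact hi), hlen,
      wpow_getElem? r k _ (Nat.mod_lt _ (by omega)),
      Nat.mod_mod_of_dvd _ (dvd_mul_left r.length k),
      wpow_getElem? (r.rotate s) k i (by rw [List.length_rotate]; exact hi),
      List.length_rotate, List.getElem?_rotate (Nat.mod_lt _ hr0),
      Nat.mod_add_mod]
  · rw [List.getElem?_eq_none (by rw [List.length_rotate, hlen]; omega),
      List.getElem?_eq_none (by rw [wpow_length, List.length_rotate]; omega)]

theorem prim_conj {u u' r : List α} (h : u.IsRotated u') (hr : IsPrimRoot r u) :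
    ∃ r', r.IsRotated r' ∧ IsPrimRoot r' u' := by
  obtain ⟨s, hs⟩ := h
  obtain ⟨⟨k, hk1, hk2⟩, hmin⟩ := hr
  refine ⟨r.rotate s, ⟨s, rfl⟩, ⟨⟨k, hk1, by rw [← hs, hk2, wpow_rotate]⟩, ?_⟩⟩
  intro w m hm hw
  obtain ⟨s', hs'⟩ := (List.IsRotated.symm ⟨s, hs⟩ : u'.IsRotated u)
  have hu : u = wpow (w.rotate s') m := by rw [← hs', hw, wpow_rotate]
  have := hmin (w.rotate s') m hm hu
  simpa [List.length_rotate] using this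

theorem wpow_prefix (r : List α) {k : ℕ} (hk : 1 ≤ k) : r <+: wpow r k := by
  obtain ⟨j, rfl⟩ : ∃ j, k = j + 1 := ⟨k - 1, by omega⟩
  rw [wpow]
  exact List.prefix_append r _

theorem prim_unique {r1 r2 t : List α} (h1 : IsPrimRoot r1 t) (h2 : IsPrimRoot r2 t) :
    r1 = r2 := by
  obtain ⟨⟨k1, hk1, ht1⟩, hm1⟩ := h1
  obtain ⟨⟨k2, hk2, ht2⟩, hm2⟩ := h2
  have l1 : r1.length ≤ r2.length := hm1 r2 k2 hk2 ht2
  have l2 : r2.length ≤ r1.length := hm2 r1 k1 hk1 ht1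
  have p1 : r1 <+: t := by rw [ht1]; exact wpow_prefix r1 hk1
  have p2 : r2 <+: t := by rw [ht2]; exact wpow_prefix r2 hk2
  exact (List.prefix_of_prefix_length_le p1 p2 l1).eq_of_length (le_antisymm l1 l2)

theorem prim_exists (t : List α) : ∃ r, IsPrimRoot r t := by
  classical
  have hP : ∃ m, ∃ w : List α, ∃ k, 1 ≤ k ∧ t = wpow w k ∧ w.length = m :=
    ⟨t.length, t, 1, le_rfl, (wpow_one t).symm, rfl⟩
  obtain ⟨w, k, hk, ht, hw⟩ := Nat.find_spec hP
  refine ⟨w, ⟨k, hk, ht⟩, ?_⟩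
  intro w' k' hk' ht'
  have := Nat.find_min' hP (m := w'.length) ⟨w', k', hk', ht', rfl⟩
  omega

theorem prim_pow {t r : List α} (ht : t ≠ []) (hr : IsPrimRoot r t) {a : ℕ} (ha : 1 ≤ a) :
    IsPrimRoot r (wpow t a) := by
  obtain ⟨⟨k, hk, htk⟩, hmin⟩ := hr
  constructor
  · exact ⟨k * a, Nat.mul_pos hk ha, by rw [htk, wpow_mul]⟩
  · intro w m hm hw
    have hp : 0 < t.length := List.length_pos_iff.mpr ht
    have hq : 0 < w.length := by
      rcases Nat.eq_zero_or_pos w.length with h0 | h0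
      · exfalso
        have hwnil : w = [] := List.length_eq_zero_iff.mp h0
        rw [hwnil, wpow_nil] at hw
        have hcl := congrArg List.length hw
        rw [wpow_length] at hcl
        simp only [List.length_nil] at hcl
        rcases Nat.mul_eq_zero.mp hcl with h | h <;> omega
      · exact h0
    set p := t.length
    set q := w.length
    set g := Nat.gcd p q with hgdef
    set L := (wpow t a).length with hLdef
    have hLval : L = a * p := wpow_length t a
    have hlen : a * p = m * q := by
      have := congrArg List.length hw
      rwa [wpow_length, wpow_length] at this
    have hL0 : 0 < L := by rw [hLval]; positivity
    have hg0 : 0 < g := Nat.gcd_pos_of_pos_left q hp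
    have hgp : g ∣ p := Nat.gcd_dvd_left p q
    have hgq : g ∣ q := Nat.gcd_dvd_right p q
    have hgle : g ≤ p := Nat.le_of_dvd hp hgp
    have hlcm_dvd : Nat.lcm p q ∣ L := by
      apply Nat.lcm_dvd
      · rw [hLval]; exact dvd_mul_left p a
      · rw [hLval, hlen]; exact dvd_mul_left q m
    have hlcm_le : Nat.lcm p q ≤ L := Nat.le_of_dvd hL0 hlcm_dvd
    have harith : p + q - g ≤ Nat.lcm p q := by
      obtain ⟨p', hp'⟩ := hgp
      obtain ⟨q', hq'⟩ := hgq
      have hlcm_eq : Nat.lcm p q = g * p' * q' := by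
        have h1 : g * Nat.lcm p q = p * q := Nat.gcd_mul_lcm p q
        have h2 : p * q = g * (g * p' * q') := by rw [hp', hq']; ring
        rw [h2] at h1
        exact Nat.eq_of_mul_eq_mul_left hg0 h1
      have hp1 : 1 ≤ p' := by
        rcases Nat.eq_zero_or_pos p' with rfl | h
        · rw [Nat.mul_zero] at hp'; omega
        · exact h
      have hq1 : 1 ≤ q' := by
        rcases Nat.eq_zero_or_pos q' with rfl | h
        · rw [Nat.mul_zero] at hq'; omega
        · exact h
      have hkey : p' + q' ≤ p' * q' + 1 := by
        obtain ⟨p'', rfl⟩ : ∃ x, p' = x + 1 := ⟨p' - 1, by omega⟩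
        obtain ⟨q'', rfl⟩ : ∃ x, q' = x + 1 := ⟨q' - 1, by omega⟩
        have hexp : (p'' + 1) * (q'' + 1) = p'' * q'' + p'' + q'' + 1 := by ring
        omega
      rw [hlcm_eq, hp', hq', Nat.sub_le_iff_le_add]
      calc g * p' + g * q' = g * (p' + q') := by ring
        _ ≤ g * (p' * q' + 1) := Nat.mul_le_mul_left g hkey
        _ = g * p' * q' + g := by ring
    have hLlen : p + q - g ≤ L := le_trans harith hlcm_le
    have hperP : ∀ i, i + p < L → (wpow t a)[i + p]? = (wpow t a)[i]? :=
      factor_period (List.infix_refl (wpow t a))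
    have hperQ : ∀ i, i + q < L → (wpow t a)[i + q]? = (wpow t a)[i]? := by
      have : wpow t a <:+: wpow w m := by rw [← hw]
      exact factor_period this
    have key := fine_wilf hp hq hLlen hperP hperQ
    have hpt : p ≤ L := by
      rw [hLval]; calc p = 1 * p := (one_mul p).symm
        _ ≤ a * p := Nat.mul_le_mul_right p ha
    have hzt : ∀ i, i < p → t[i]? = (wpow t a)[i]? := by
      intro i hi
      rw [wpow_getElem? t a i (by rw [← hLval]; omega), Nat.mod_eq_of_lt hi]
    have hmod : ∀ i, i < p → t[i]? = t[i % g]? := by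
      intro i hi
      rw [hzt i hi, hzt (i % g) (lt_of_le_of_lt (Nat.mod_le i g) hi)]
      exact key i (by omega)
    have hteq := pow_of_mod t g hg0 hgle hgp hmod
    have hdiv : 1 ≤ p / g := (Nat.one_le_div_iff hg0).mpr hgle
    have := hmin (t.take g) (p / g) hdiv hteq
    have htg : (t.take g).length = g := by rw [List.length_take]; omega
    rw [htg] at this
    exact le_trans this (Nat.le_of_dvd hq hgq)

end FWaux

/-- Fine and Wilf style lemma: if `u^n` and `v^n` have a common factor of length at
least `|u| + |v| - gcd(|u|,|v|)`, then the primitive roots of `u` and `v` are conjugate. -/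
theorem stmt0 {α : Type*} (u v f : List α) (hu : u ≠ []) (hv : v ≠ [])
    (n : ℕ) (hfu : f <:+: wpow u n) (hfv : f <:+: wpow v n)
    (hlen : u.length + v.length - Nat.gcd u.length v.length ≤ f.length)
    (ru rv : List α) (hru : IsPrimRoot ru u) (hrv : IsPrimRoot rv v) :
    WordConj ru rv := by
  set p := u.length with hpdef
  set q := v.length with hqdef
  set g := Nat.gcd p q with hgdef
  have hp : 0 < p := List.length_pos_iff.mpr hu
  have hq : 0 < q := List.length_pos_iff.mpr hv
  have hg0 : 0 < g := Nat.gcd_pos_of_pos_left q hp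
  have hgp : g ∣ p := Nat.gcd_dvd_left p q
  have hgq : g ∣ q := Nat.gcd_dvd_right p q
  have hglep : g ≤ p := Nat.le_of_dvd hp hgp
  have hgleq : g ≤ q := Nat.le_of_dvd hq hgq
  have hLp : p ≤ f.length := by omega
  have hLq : q ≤ f.length := by omega
  have hperP := factor_period hfu
  have hperQ := factor_period hfv
  have key := fine_wilf hp hq hlen hperP hperQ
  set t := f.take g with htdef
  have htlen : t.length = g := by rw [htdef, List.length_take]; omega
  have ht0 : t ≠ [] := by
    intro h; rw [h] at htlen; simp at htlen; omega
  -- f.take p = wpow t (p / g)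
  have htake_pow : ∀ m : ℕ, 0 < m → g ∣ m → m ≤ f.length →
      f.take m = wpow t (m / g) := by
    intro m hm hgm hmf
    have hgm' : g ≤ m := Nat.le_of_dvd hm hgm
    have hml : (f.take m).length = m := by rw [List.length_take]; omega
    have hmod : ∀ i, i < (f.take m).length → (f.take m)[i]? = (f.take m)[i % g]? := by
      intro i hi
      rw [hml] at hi
      rw [List.getElem?_take_of_lt hi,
        List.getElem?_take_of_lt (lt_of_le_of_lt (Nat.mod_le i g) hi)]
      exact key i (by omega)
    have := pow_of_mod (f.take m) g hg0 (by rw [hml]; exact hgm') (by rw [hml]; exact hgm) hmod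
    rw [hml] at this
    rw [this]
    congr 1
    rw [htdef, List.take_take]
    congr 1
    omega
  have hu' : f.take p = wpow t (p / g) := htake_pow p hp hgp hLp
  have hv' : f.take q = wpow t (q / g) := htake_pow q hq hgq hLq
  obtain ⟨s, hs⟩ := prim_exists t
  have hdivp : 1 ≤ p / g := (Nat.one_le_div_iff hg0).mpr hglep
  have hdivq : 1 ≤ q / g := (Nat.one_le_div_iff hg0).mpr hgleq
  have hpu : IsPrimRoot s (f.take p) := by rw [hu']; exact prim_pow ht0 hs hdivp
  have hpv : IsPrimRoot s (f.take q) := by rw [hv']; exact prim_pow ht0 hs hdivq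
  obtain ⟨mu, hmu⟩ := conj_take hfu hLp
  obtain ⟨mv, hmv⟩ := conj_take hfv hLq
  obtain ⟨ru', hru1, hru2⟩ := prim_conj (⟨mu, hmu⟩ : u.IsRotated (f.take p)) hru
  obtain ⟨rv', hrv1, hrv2⟩ := prim_conj (⟨mv, hmv⟩ : v.IsRotated (f.take q)) hrv
  have heu : ru' = s := prim_unique hru2 hpu
  have hev : rv' = s := prim_unique hrv2 hpv
  have hconj : ru.IsRotated rv := by
    apply (heu ▸ hru1).trans
    exact (hev ▸ hrv1).symm
  obtain ⟨m, hm⟩ := hconj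
  refine ⟨ru.take (m % ru.length), ru.drop (m % ru.length),
    (List.take_append_drop _ _).symm, ?_⟩
  rw [← hm, List.rotate_eq_drop_append_take_mod]
end

section
/- Let Σ, Γ, Λ be finite alphabets, Ψ : Γ* → Σ* and Φ : Γ* → Λ* be monoid morphisms determined by their action on letters, and let M = max over γ ∈ Γ of |Ψ(γ)|. For every word u ∈ Γ*, if |Ψ(u)| > (|Λ|+1)·M, then there exist positions 1 ≤ k₁ < k₂ ≤ |u| such that (1) |Ψ(u[1..k₁−1])| ≤ (|Λ|+1)·M, (2) 1 ≤ |Ψ(u[k₁..k₂−1])| ≤ (|Λ|+1)·M, and (3) Φ(u[k₁]) = Φ(u[k₂]). -/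
/-! Weigh each letter by `w a ≤ M` (for the theorem, `w γ = |Ψ(γ)|`) and let `N = |Λ|`. Cut `u`
after its shortest prefix of weight `> N·M`. That prefix has more than `N` letters of nonzero
weight, so two of them, at positions `i < j`, have the same image under `Φ`. Everything before `j`
lies in the prefix minus its last letter, of weight `≤ N·M`, which bounds both `u[..i-1]` and
`u[i..j-1]`; the latter is nonempty under `Ψ` because `u[i]` has nonzero weight. -/

/-- The morphism `Γ* → Σ*` extending the letter map `ψ`. -/
def homExt {Γ S : Type*} (ψ : Γ → List S) (u : List Γ) : List S := (u.map ψ).flatten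

namespace List

variable {α β : Type*} (w : α → ℕ)

lemma monotone_sum_map_take (u : List α) : Monotone fun k => ((u.take k).map w).sum :=
  monotone_nat_of_le_succ fun k => by simp [take_add_one]

lemma sum_map_take_add_sum_map_take_drop {i j : ℕ} (hij : i ≤ j) (u : List α) :
    ((u.take i).map w).sum + (((u.drop i).take (j - i)).map w).sum = ((u.take j).map w).sum := by
  rw [← sum_append, ← map_append, ← take_add, Nat.add_sub_cancel' hij]

lemma exists_lt_map_eq_of_card_mul_lt_sum [Fintype β] (f : α → β) {M : ℕ}
    (hw : ∀ a, w a ≤ M) (l : List α) (h : Fintype.card β * M < (l.map w).sum) :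
    ∃ (i j : ℕ) (hi : i < l.length) (hj : j < l.length), i < j ∧ w l[i] ≠ 0 ∧ f l[i] = f l[j] := by
  set s := Finset.univ.filter fun i : Fin l.length => w l[i] ≠ 0
  have hsum : (l.map w).sum ≤ s.card * M := calc
    (l.map w).sum = ∑ i : Fin l.length, w l[i] := by simp [← Fin.sum_univ_getElem]
    _ = ∑ i ∈ s, w l[i] := (Finset.sum_filter_ne_zero _).symm
    _ ≤ s.card * M := by simpa using Finset.sum_le_card_nsmul s _ M fun i _ => hw l[i]
  have hcard : (Finset.univ : Finset β).card < s.card := by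
    simpa using lt_of_mul_lt_mul_right (h.trans_le hsum)
  obtain ⟨i, hi, j, hj, hne, hf⟩ :=
    Finset.exists_ne_map_eq_of_card_lt_of_maps_to hcard (f := fun i => f l[i]) (by simp)
  rcases hne.lt_or_gt with hij | hji
  · exact ⟨i, j, i.2, j.2, hij, (Finset.mem_filter.1 hi).2, hf⟩
  · exact ⟨j, i, j.2, i.2, hji, (Finset.mem_filter.1 hj).2, hf.symm⟩

theorem exists_pumping_factor [Fintype β] (f : α → β) {M : ℕ} (hw : ∀ a, w a ≤ M)
    (u : List α) (h : Fintype.card β * M < (u.map w).sum) :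
    ∃ (i j : ℕ) (hi : i < u.length) (hj : j < u.length), i < j ∧
      ((u.take i).map w).sum ≤ Fintype.card β * M ∧
      0 < (((u.drop i).take (j - i)).map w).sum ∧
      (((u.drop i).take (j - i)).map w).sum ≤ Fintype.card β * M ∧ f u[i] = f u[j] := by
  have hex : ∃ k, Fintype.card β * M < ((u.take k).map w).sum := ⟨u.length, by simpa⟩
  obtain ⟨k, hk⟩ := Nat.exists_eq_add_one.2 (Nat.find_pos hex |>.2 (by simp))
  have hshort : ((u.take k).map w).sum ≤ Fintype.card β * M :=
    not_lt.1 (Nat.find_min hex (by omega))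
  obtain ⟨i, j, hi, hj, hij, hwi, hf⟩ :=
    exists_lt_map_eq_of_card_mul_lt_sum w f hw _ (Nat.find_spec hex)
  simp only [length_take, hk, lt_min_iff, getElem_take] at hi hj hwi hf
  have hsucc : ((u.take (i + 1)).map w).sum = ((u.take i).map w).sum + w u[i] := by
    rw [take_add_one, getElem?_eq_getElem hi.2, map_append, sum_append]; simp
  have hsplit := sum_map_take_add_sum_map_take_drop w hij.le u
  have hmono := monotone_sum_map_take w u
  have hsucc_le : ((u.take (i + 1)).map w).sum ≤ ((u.take j).map w).sum := hmono hij
  have hj_le : ((u.take j).map w).sum ≤ ((u.take k).map w).sum := hmono (by omega)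
  exact ⟨i, j, hi.2, hj.2, hij, by omega, by omega, by omega, hf⟩

end List

lemma length_homExt {Γ S : Type*} (ψ : Γ → List S) (u : List Γ) :
    (homExt ψ u).length = (u.map fun γ => (ψ γ).length).sum := by
  simp [homExt, List.length_flatten, Function.comp_def]

theorem stmt5_general {Γ S Λ : Type*} [Fintype Γ] [Fintype Λ]
    (ψ : Γ → List S) (φ : Γ → Λ) (u : List Γ)
    (h : (Fintype.card Λ + 1) * (Finset.univ.sup fun γ => (ψ γ).length)
          < (homExt ψ u).length) :
    ∃ (k₁ k₂ : ℕ) (h₁ : k₁ < u.length) (h₂ : k₂ < u.length),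
      k₁ < k₂ ∧
      (homExt ψ (u.take k₁)).length
        ≤ (Fintype.card Λ + 1) * (Finset.univ.sup fun γ => (ψ γ).length) ∧
      1 ≤ (homExt ψ ((u.drop k₁).take (k₂ - k₁))).length ∧
      (homExt ψ ((u.drop k₁).take (k₂ - k₁))).length
        ≤ (Fintype.card Λ + 1) * (Finset.univ.sup fun γ => (ψ γ).length) ∧
      φ (u.get ⟨k₁, h₁⟩) = φ (u.get ⟨k₂, h₂⟩) := by
  set M := Finset.univ.sup fun γ => (ψ γ).length
  have hM : ∀ γ, (ψ γ).length ≤ M := fun γ =>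
    Finset.le_sup (f := fun γ => (ψ γ).length) (Finset.mem_univ γ)
  have hCM : Fintype.card Λ * M ≤ (Fintype.card Λ + 1) * M := by gcongr; omega
  simp only [length_homExt, List.get_eq_getElem] at h ⊢
  obtain ⟨i, j, hi, hj, hij, hpre, hpos, hfac, hφ⟩ :=
    List.exists_pumping_factor _ φ hM u (hCM.trans_lt h)
  exact ⟨i, j, hi, hj, hij, hpre.trans hCM, hpos, hfac.trans hCM, hφ⟩

/-- Pumping lemma for morphisms: if `|Ψ(u)| > (|Λ|+1)·M` where `M` is the maximal
length of the image of a letter, then there are positions `k₁ < k₂` of `u` such that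
the image of the prefix before `k₁` is short, the image of the factor `u[k₁..k₂-1]`
is nonempty and short, and `Φ(u[k₁]) = Φ(u[k₂])`. (0-based indexing.) -/
theorem stmt5 {Γ S Λ : Type*} [Fintype Γ] [Fintype S] [Fintype Λ]
    (ψ : Γ → List S) (φ : Γ → Λ) (u : List Γ)
    (h : (Fintype.card Λ + 1) * (Finset.univ.sup fun γ => (ψ γ).length)
          < (homExt ψ u).length) :
    ∃ (k₁ k₂ : ℕ) (h₁ : k₁ < u.length) (h₂ : k₂ < u.length),
      k₁ < k₂ ∧
      (homExt ψ (u.take k₁)).length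
        ≤ (Fintype.card Λ + 1) * (Finset.univ.sup fun γ => (ψ γ).length) ∧
      1 ≤ (homExt ψ ((u.drop k₁).take (k₂ - k₁))).length ∧
      (homExt ψ ((u.drop k₁).take (k₂ - k₁))).length
        ≤ (Fintype.card Λ + 1) * (Finset.univ.sup fun γ => (ψ γ).length) ∧
      φ (u.get ⟨k₁, h₁⟩) = φ (u.get ⟨k₂, h₂⟩) :=
  stmt5_general ψ φ u h
end

section
/- In a one-step sequence s over {1,…,m} that is K-crossing, if z₁, z₂, …, z_t are consecutive z-motions of s, then for all i ≤ t − K, the z-motions z_i and z_{i+K} are positionally disjoint. -/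
/-- `a` (1-based, of length `n`) is a one-step sequence over `{1,…,m}`. -/
def OneStep (a : ℕ → ℕ) (n m : ℕ) : Prop :=
  1 ≤ n ∧ a 1 = 1 ∧ a n = m ∧
  (∀ i, 1 ≤ i → i ≤ n → 1 ≤ a i ∧ a i ≤ m) ∧
  (∀ i, 1 ≤ i → i < n → a (i + 1) = a i + 1 ∨ a i = a (i + 1) + 1)

/-- `a` is `K`-crossing: each value is taken at most `K` times. -/
def KCrossing (a : ℕ → ℕ) (n K : ℕ) : Prop :=
  ∀ x, ((Finset.Icc 1 n).filter fun i => a i = x).card ≤ K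

/-- `r` is a reversal of the sequence. -/
def IsReversal (a : ℕ → ℕ) (n r : ℕ) : Prop :=
  1 < r ∧ r < n ∧ a (r + 1) = a (r - 1)

/-- `r < r'` are two consecutive reversals. -/
def ConsecRev (a : ℕ → ℕ) (n r r' : ℕ) : Prop :=
  IsReversal a n r ∧ IsReversal a n r' ∧ r < r' ∧
  ∀ s, r < s → s < r' → ¬ IsReversal a n s

/-- The subsequence `a_e, …, a_f` is a z-motion with (consecutive) reversals `r < r'`:
`e` lies between the previous reversal and `r`, `f` between `r'` and the next reversal,
`a e = a r'` and `a f = a r`. -/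
def ZInstance (a : ℕ → ℕ) (n e r r' f : ℕ) : Prop :=
  ConsecRev a n r r' ∧ 1 ≤ e ∧ e < r ∧ r' < f ∧ f ≤ n ∧
  a e = a r' ∧ a f = a r ∧
  (∀ s, e < s → s < r → ¬ IsReversal a n s) ∧
  (∀ s, r' < s → s < f → ¬ IsReversal a n s)

/-- The pair of consecutive reversals `(r, r')` determines a z-motion. -/
def IsZMotion (a : ℕ → ℕ) (n r r' : ℕ) : Prop := ∃ e f, ZInstance a n e r r' f

/-- Two z-motions, given by their pairs of reversals, are positionally disjoint. -/
def PosDisjoint (a : ℕ → ℕ) (z z' : ℕ × ℕ) : Prop :=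
  max (a z.1) (a z.2) < min (a z'.1) (a z'.2) ∨
  max (a z'.1) (a z'.2) < min (a z.1) (a z.2)

/-!
Write `u k`, `w k` for the values at the two reversals of the `k`-th z-motion. Between
consecutive reversals the sequence is monotone, so the endpoints of the z-motions put both
`u k` and `w (k + 1)` between `w k` and `u (k + 1)`. Consequently the pairs `(u k, w k)` keep
their orientation and drift monotonically in one direction; if `z_i` and `z_{i+K}` overlap,
the value `u i` then lies between `u k` and `w k` for every `i ≤ k ≤ i + K`, so each of these
`K + 1` pairwise disjoint monotone segments takes the value `u i`, against `K`-crossing.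
-/

open Set OrderDual
open scoped Interval

section Zigzag

variable {α : Type*} [LinearOrder α] {u w : ℕ → α} {N : ℕ}

lemma zigzag_lt (hne : ∀ k ≤ N, u k ≠ w k)
    (hstep : ∀ k < N, u k ∈ [[w k, u (k + 1)]] ∧ w (k + 1) ∈ [[w k, u (k + 1)]])
    (h0 : w 0 < u 0) : ∀ k ≤ N, w k < u k := by
  intro k hk
  induction k with
  | zero => exact h0
  | succ k ih =>
    have hlt := ih (by omega)
    obtain ⟨hu, hw⟩ := hstep k (by omega)
    rw [mem_uIcc] at hu hw
    refine lt_of_le_of_ne ?_ (hne (k + 1) hk).symm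
    rcases hu with hu | hu <;> rcases hw with hw | hw <;> order

lemma zigzag_mem_uIcc_of_lt (hne : ∀ k ≤ N, u k ≠ w k)
    (hstep : ∀ k < N, u k ∈ [[w k, u (k + 1)]] ∧ w (k + 1) ∈ [[w k, u (k + 1)]])
    (h0 : w 0 < u 0) (hov : min (u N) (w N) ≤ max (u 0) (w 0)) :
    ∀ k ≤ N, u 0 ∈ [[u k, w k]] := by
  have hlt := zigzag_lt hne hstep h0
  have hmono : MonotoneOn u (Iic N) ∧ MonotoneOn w (Iic N) := by
    constructor <;> refine monotoneOn_of_le_add_one ordConnected_Iic fun k _ _ hk1 => ?_ <;>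
    · have hkN : k < N := hk1
      have := hlt k hkN.le
      obtain ⟨hu, hw⟩ := hstep k hkN
      rw [mem_uIcc] at hu hw
      rcases hu with hu | hu <;> rcases hw with hw | hw <;> order
  intro k hk
  have huk : u 0 ≤ u k := hmono.1 (Nat.zero_le N) hk (Nat.zero_le k)
  have hwk : w k ≤ w N := hmono.2 hk (mem_Iic.mpr le_rfl) hk
  have := hlt 0 (by omega)
  have := hlt N le_rfl
  rw [min_eq_right (by order), max_eq_left (by order)] at hov
  exact mem_uIcc_of_ge (by order) huk

lemma zigzag_mem_uIcc (hne : ∀ k ≤ N, u k ≠ w k)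
    (hstep : ∀ k < N, u k ∈ [[w k, u (k + 1)]] ∧ w (k + 1) ∈ [[w k, u (k + 1)]])
    (hov₁ : min (u N) (w N) ≤ max (u 0) (w 0)) (hov₂ : min (u 0) (w 0) ≤ max (u N) (w N)) :
    ∀ k ≤ N, u 0 ∈ [[u k, w k]] := by
  rcases (hne 0 (Nat.zero_le N)).lt_or_gt with h0 | h0
  · intro k hk
    have hdual := zigzag_mem_uIcc_of_lt (u := toDual ∘ u) (w := toDual ∘ w) hne
      (fun k hk => by
        simpa only [Function.comp, uIcc_toDual, mem_preimage, ofDual_toDual] using hstep k hk)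
      (toDual_lt_toDual.mpr h0)
      (by simpa only [Function.comp, ← toDual_max, ← toDual_min, toDual_le_toDual] using hov₂)
      k hk
    simpa only [Function.comp, uIcc_toDual, mem_preimage, ofDual_toDual] using hdual
  · exact zigzag_mem_uIcc_of_lt hne hstep h0 hov₁

end Zigzag

section OneStepSeq

variable {a : ℕ → ℕ} {n m q q' : ℕ}

lemma ConsecRev.diff_eq (hs : OneStep a n m) (h : ConsecRev a n q q') :
    ∀ s, q ≤ s → s < q' → (a (s + 1) : ℤ) - a s = a (q + 1) - a q := by
  obtain ⟨-, -, -, -, hstep⟩ := hs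
  obtain ⟨⟨hq, -, -⟩, ⟨-, hq'n, -⟩, -, hno⟩ := h
  intro s hqs
  induction s, hqs using Nat.le_induction with
  | base => exact fun _ => rfl
  | succ s hqs ih =>
    intro hs'
    have hturn : a (s + 1 + 1) ≠ a s := fun heq =>
      hno (s + 1) (by omega) hs' ⟨by omega, by omega, by simpa using heq⟩
    rcases hstep s (by omega) (by omega) with h₁ | h₁ <;>
      rcases hstep (s + 1) (by omega) (by omega) with h₂ | h₂ <;>
      · have := ih (by omega); omega

lemma ConsecRev.eq_add_or_add_eq (hs : OneStep a n m) (h : ConsecRev a n q q') :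
    (∀ s ∈ Icc q q', a s = a q + (s - q)) ∨ (∀ s ∈ Icc q q', a s + (s - q) = a q) := by
  have hdiff := h.diff_eq hs
  have hq : 1 ≤ q := h.1.1.le
  have hqn : q < n := h.2.2.1.trans h.2.1.2.1
  rcases hs.2.2.2.2 q hq hqn with hup | hdown
  · left
    rintro s ⟨hqs, hsq'⟩
    induction s, hqs using Nat.le_induction with
    | base => simp
    | succ s hqs ih => have := hdiff s hqs (by omega); have := ih (by omega); omega
  · right
    rintro s ⟨hqs, hsq'⟩
    induction s, hqs using Nat.le_induction with
    | base => simp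
    | succ s hqs ih => have := hdiff s hqs (by omega); have := ih (by omega); omega

lemma ConsecRev.apply_ne (hs : OneStep a n m) (h : ConsecRev a n q q') : a q ≠ a q' := by
  have hlt := h.2.2.1
  rcases h.eq_add_or_add_eq hs with hf | hf <;>
  · have := hf q' ⟨hlt.le, le_rfl⟩; omega

lemma ConsecRev.mem_uIcc (hs : OneStep a n m) (h : ConsecRev a n q q') :
    ∀ s ∈ Icc q q', a s ∈ [[a q, a q']] := by
  intro s hsI
  have hq' : q' ∈ Icc q q' := ⟨h.2.2.1.le, le_rfl⟩
  rw [Set.mem_uIcc]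
  rcases h.eq_add_or_add_eq hs with hf | hf <;>
  · have := hf s hsI; have := hf q' hq'; have := hsI.2; omega

lemma ConsecRev.exists_eq (hs : OneStep a n m) (h : ConsecRev a n q q') :
    ∀ x ∈ [[a q, a q']], ∃ s ∈ Icc q q', a s = x := by
  intro x hx
  have hlt := h.2.2.1
  have hq' : q' ∈ Icc q q' := ⟨hlt.le, le_rfl⟩
  rw [Set.mem_uIcc] at hx
  rcases h.eq_add_or_add_eq hs with hf | hf
  · have := hf q' hq'
    refine ⟨q + (x - a q), ⟨by omega, by omega⟩, ?_⟩
    have := hf (q + (x - a q)) ⟨by omega, by omega⟩; omega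
  · have := hf q' hq'
    refine ⟨q + (a q - x), ⟨by omega, by omega⟩, ?_⟩
    have := hf (q + (a q - x)) ⟨by omega, by omega⟩; omega

lemma IsZMotion.consecRev {r r' : ℕ} (hz : IsZMotion a n r r') : ConsecRev a n r r' := by
  obtain ⟨e, f, hzi⟩ := hz
  exact hzi.1

lemma IsZMotion.mem_uIcc_of_consecRev {r r' l l' : ℕ} (hs : OneStep a n m)
    (hz : IsZMotion a n r r') (hz' : IsZMotion a n l l') (hc : ConsecRev a n r' l) :
    a r ∈ [[a r', a l]] ∧ a l' ∈ [[a r', a l]] := by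
  obtain ⟨e, f, -, -, -, hr'f, -, -, haf, -, hnof⟩ := hz
  obtain ⟨e', f', -, -, he'l, -, -, hae', -, hnoe', -⟩ := hz'
  have hfl : f ≤ l := by
    by_contra! hlf
    exact hnof l hc.2.2.1 hlf hc.2.1
  have hr'e' : r' ≤ e' := by
    by_contra! he'r'
    exact hnoe' r' he'r' hc.2.2.1 hc.1
  rw [← haf, ← hae']
  exact ⟨hc.mem_uIcc hs f ⟨hr'f.le, hfl⟩, hc.mem_uIcc hs e' ⟨hr'e', he'l.le⟩⟩

end OneStepSeq

lemma le_card_of_forall_exists_mem_Icc {S : Finset ℕ} {l r : ℕ → ℕ} {N : ℕ}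
    (hsep : ∀ k < N, r k < l (k + 1)) (hmem : ∀ k ≤ N, ∃ s ∈ S, s ∈ Icc (l k) (r k)) :
    N + 1 ≤ S.card := by
  suffices h : ∀ k ≤ N, k + 1 ≤ (S.filter (· ≤ r k)).card from
    (h N le_rfl).trans (Finset.card_filter_le _ _)
  intro k hk
  induction k with
  | zero =>
    obtain ⟨s, hsS, -, hsr⟩ := hmem 0 hk
    exact Finset.card_pos.mpr ⟨s, Finset.mem_filter.mpr ⟨hsS, hsr⟩⟩
  | succ k ih =>
    obtain ⟨s, hsS, hls, hsr⟩ := hmem (k + 1) hk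
    have hrk := hsep k (by omega)
    refine (ih (by omega)).trans_lt (Finset.card_lt_card ⟨?_, fun hsub => ?_⟩)
    · exact Finset.monotone_filter_right S fun x _ (hx : x ≤ r k) => by omega
    · have := (Finset.mem_filter.mp (hsub (Finset.mem_filter.mpr ⟨hsS, hsr⟩))).2
      omega

/-- In a `K`-crossing one-step sequence, given consecutive z-motions `z₁, …, z_t`
(each `z_{k+1}` starting at the reversal immediately following the second reversal of
`z_k`), for all `i ≤ t − K` the z-motions `z_i` and `z_{i+K}` are positionally
disjoint. -/
theorem stmt6 (a : ℕ → ℕ) (n m K t : ℕ)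
    (hs : OneStep a n m) (hK : KCrossing a n K)
    (p : ℕ → ℕ × ℕ)
    (hz : ∀ k, 1 ≤ k → k ≤ t → IsZMotion a n (p k).1 (p k).2)
    (hcons : ∀ k, 1 ≤ k → k < t → ConsecRev a n (p k).2 (p (k + 1)).1) :
    ∀ i, 1 ≤ i → i + K ≤ t → PosDisjoint a (p i) (p (i + K)) := by
  intro i hi hiK
  by_contra hnd
  simp only [PosDisjoint, not_or, not_lt] at hnd
  have hzk (k : ℕ) (hk : k ≤ K) : IsZMotion a n (p (i + k)).1 (p (i + k)).2 :=
    hz (i + k) (by omega) (by omega)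
  have hck (k : ℕ) (hk : k < K) : ConsecRev a n (p (i + k)).2 (p (i + k + 1)).1 :=
    hcons (i + k) (by omega) (by omega)
  have hcross : ∀ k ≤ K, a (p i).1 ∈ [[a (p (i + k)).1, a (p (i + k)).2]] :=
    zigzag_mem_uIcc (u := fun k => a (p (i + k)).1) (w := fun k => a (p (i + k)).2)
      (fun k hk => (hzk k hk).consecRev.apply_ne hs)
      (fun k hk => (hzk k hk.le).mem_uIcc_of_consecRev hs (hzk (k + 1) hk) (hck k hk))
      hnd.1 hnd.2
  refine (hK (a (p i).1)).not_gt (le_card_of_forall_exists_mem_Icc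
    (l := fun k => (p (i + k)).1) (r := fun k => (p (i + k)).2) (fun k hk => (hck k hk).2.2.1)
    fun k hk => ?_)
  have hcr := (hzk k hk).consecRev
  obtain ⟨s, hsI, hsa⟩ := hcr.exists_eq hs _ (hcross k hk)
  have h1s : 1 ≤ s := hcr.1.1.le.trans hsI.1
  have hsn : s ≤ n := hsI.2.trans hcr.2.1.2.1.le
  exact ⟨s, Finset.mem_filter.mpr ⟨Finset.mem_Icc.mpr ⟨h1s, hsn⟩, hsa⟩, hsI⟩
end

section
/- Let s be a one-step sequence with reversals r₁ < ⋯ < r_l. Let (r_i, r_j) with i < j be a pair of reversals and z = (r, r') a z-motion. If a_r lies between a_{r_i} and a_{r_j} and r ∈ {r_{i+1}, r_{j+1}}, or if a_{r'} lies between a_{r_i} and a_{r_j} and r' ∈ {r_{i−1}, r_{j−1}}, then z is nested in (r_i, r_j), i.e., both a_r and a_{r'} lie between a_{r_i} and a_{r_j}. -/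
/-- `x` lies between `y` and `z`. -/
def Between (x y z : ℕ) : Prop := (y ≤ x ∧ x ≤ z) ∨ (z ≤ x ∧ x ≤ y)

lemma dir_up (a : ℕ → ℕ) (n m : ℕ) (hs : OneStep a n m) (p q : ℕ)
    (hp : 1 ≤ p) (hqn : q ≤ n)
    (hnr : ∀ s, p < s → s < q → ¬ IsReversal a n s)
    (hup : a (p + 1) = a p + 1) :
    ∀ t, p ≤ t → t < q → a (t + 1) = a t + 1 := by
  obtain ⟨hn, -, -, -, hstep⟩ := hs
  intro t ht
  induction t, ht using Nat.le_induction with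
  | base => intro _; exact hup
  | succ t ht ih =>
    intro hlt
    have h2 := ih (by omega)
    have hstep2 := hstep (t + 1) (by omega) (by omega)
    have hnotrev := hnr (t + 1) (by omega) hlt
    simp only [IsReversal, Nat.add_sub_cancel] at hnotrev
    have hne : a (t + 1 + 1) ≠ a t := by
      intro hcontra
      exact hnotrev ⟨by omega, by omega, hcontra⟩
    omega

lemma dir_down (a : ℕ → ℕ) (n m : ℕ) (hs : OneStep a n m) (p q : ℕ)
    (hp : 1 ≤ p) (hqn : q ≤ n)
    (hnr : ∀ s, p < s → s < q → ¬ IsReversal a n s)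
    (hdn : a p = a (p + 1) + 1) :
    ∀ t, p ≤ t → t < q → a t = a (t + 1) + 1 := by
  obtain ⟨hn, -, -, -, hstep⟩ := hs
  intro t ht
  induction t, ht using Nat.le_induction with
  | base => intro _; exact hdn
  | succ t ht ih =>
    intro hlt
    have h2 := ih (by omega)
    have hstep2 := hstep (t + 1) (by omega) (by omega)
    have hnotrev := hnr (t + 1) (by omega) hlt
    simp only [IsReversal, Nat.add_sub_cancel] at hnotrev
    have hne : a (t + 1 + 1) ≠ a t := by
      intro hcontra
      exact hnotrev ⟨by omega, by omega, hcontra⟩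
    omega

lemma val_up (a : ℕ → ℕ) (p q : ℕ)
    (h : ∀ t, p ≤ t → t < q → a (t + 1) = a t + 1) :
    ∀ v, p ≤ v → v ≤ q → a v = a p + (v - p) := by
  intro v hv
  induction v, hv using Nat.le_induction with
  | base => intro _; omega
  | succ v hv ih =>
    intro hvq
    have h1 := ih (by omega)
    have h2 := h v (by omega) (by omega)
    omega

lemma val_down (a : ℕ → ℕ) (p q : ℕ)
    (h : ∀ t, p ≤ t → t < q → a t = a (t + 1) + 1) :
    ∀ v, p ≤ v → v ≤ q → a p = a v + (v - p) := by
  intro v hv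
  induction v, hv using Nat.le_induction with
  | base => intro _; omega
  | succ v hv ih =>
    intro hvq
    have h1 := ih (by omega)
    have h2 := h v (by omega) (by omega)
    omega

/-- On a reversal-free stretch `[p, q]`, the value at any intermediate point
lies between the endpoint values. -/
lemma between_on (a : ℕ → ℕ) (n m : ℕ) (hs : OneStep a n m) (p q e : ℕ)
    (hp : 1 ≤ p) (hqn : q ≤ n)
    (hnr : ∀ s, p < s → s < q → ¬ IsReversal a n s)
    (hpe : p ≤ e) (heq : e ≤ q) :
    Between (a e) (a p) (a q) := by
  rcases eq_or_lt_of_le (le_trans hpe heq) with hpq | hpq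
  · have : e = p := by omega
    subst this; subst hpq
    unfold Between; omega
  · have hstep := hs.2.2.2.2 p hp (by omega)
    rcases hstep with hup | hdn
    · have hmon := dir_up a n m hs p q hp hqn hnr hup
      have h1 := val_up a p q hmon e hpe heq
      have h2 := val_up a p q hmon q (le_of_lt hpq) le_rfl
      unfold Between; omega
    · have hmon := dir_down a n m hs p q hp hqn hnr hdn
      have h1 := val_down a p q hmon e hpe heq
      have h2 := val_down a p q hmon q (le_of_lt hpq) le_rfl
      unfold Between; omega

/-- Nesting lemma: let `r 1 < ⋯ < r l` enumerate the reversals of a one-step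
sequence `a`. If `(r i, r j)` (`i < j`) is a pair of reversals and `(r k, r (k+1))`
is a z-motion such that either `a (r k)` lies between `a (r i)` and `a (r j)` with
`k ∈ {i+1, j+1}`, or `a (r (k+1))` lies between them with `k+1 ∈ {i−1, j−1}`, then
the z-motion is nested in `(r i, r j)`: both of its reversal values lie between
`a (r i)` and `a (r j)`. -/
theorem stmt7 (a : ℕ → ℕ) (n m : ℕ) (hs : OneStep a n m)
    (r : ℕ → ℕ) (l : ℕ)
    (hmono : ∀ i j, 1 ≤ i → i < j → j ≤ l → r i < r j)
    (hrev : ∀ i, 1 ≤ i → i ≤ l → IsReversal a n (r i))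
    (hall : ∀ s, IsReversal a n s → ∃ i, 1 ≤ i ∧ i ≤ l ∧ r i = s)
    (i j k : ℕ) (hi : 1 ≤ i) (hij : i < j) (hj : j ≤ l)
    (hk : 1 ≤ k) (hk1 : k + 1 ≤ l)
    (hz : IsZMotion a n (r k) (r (k + 1)))
    (hcase :
      (Between (a (r k)) (a (r i)) (a (r j)) ∧ (k = i + 1 ∨ k = j + 1)) ∨
      (Between (a (r (k + 1))) (a (r i)) (a (r j)) ∧ (k + 2 = i ∨ k + 2 = j))) :
    Between (a (r k)) (a (r i)) (a (r j)) ∧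
    Between (a (r (k + 1))) (a (r i)) (a (r j)) := by
  obtain ⟨e, f, hcr, he1, her, hrf, hfn, hae, haf, hnr1, hnr2⟩ := hz
  -- no reversal strictly between consecutive enumerated reversals
  have hnoB : ∀ c, 1 ≤ c → c + 1 ≤ l → ∀ s, r c < s → s < r (c + 1) →
      ¬ IsReversal a n s := by
    intro c hc hcl s h1 h2 hrs
    obtain ⟨t, ht1, ht2, hts⟩ := hall s hrs
    subst hts
    rcases lt_trichotomy t c with h | h | h
    · have := hmono t c ht1 h (by omega); omega
    · subst h; omega
    · by_cases h' : t = c + 1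
      · subst h'; omega
      · have := hmono (c + 1) t (by omega) (by omega) ht2; omega
  have hrk : IsReversal a n (r k) := hrev k hk (by omega)
  have hrk1 : IsReversal a n (r (k + 1)) := hrev (k + 1) (by omega) hk1
  rcases hcase with ⟨hb, hki⟩ | ⟨hb, hki⟩
  · -- a (r k) is between; k = c + 1 for c ∈ {i, j}
    have key : ∀ c, 1 ≤ c → k = c + 1 →
        Between (a (r (k + 1))) (a (r c)) (a (r k)) := by
      intro c hc hkc
      have hcl : c + 1 ≤ l := by omega
      have hrc : IsReversal a n (r c) := hrev c hc (by omega)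
      have hck : r c < r k := by
        have := hmono c k hc (by omega) (by omega); omega
      have hce : r c ≤ e := by
        by_contra h
        exact hnr1 (r c) (by omega) hck hrc
      have hbet := between_on a n m hs (r c) (r k) e
        (by have := hrc.1; omega) (le_of_lt hrk.2.1)
        (by rw [hkc]; exact hnoB c hc hcl)
        hce (le_of_lt her)
      rwa [hae] at hbet
    rcases hki with hki | hki
    · have h2 := key i hi hki
      refine ⟨hb, ?_⟩
      unfold Between at hb h2 ⊢; omega
    · have h2 := key j (by omega) hki
      refine ⟨hb, ?_⟩
      unfold Between at hb h2 ⊢; omega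
  · -- a (r (k+1)) is between; k + 2 ∈ {i, j}
    have hk2l : k + 2 ≤ l := by omega
    have hrk2 : IsReversal a n (r (k + 2)) := hrev (k + 2) (by omega) hk2l
    have hk12 : r (k + 1) < r (k + 2) := by
      have := hmono (k + 1) (k + 2) (by omega) (by omega) hk2l; omega
    have hfr2 : f ≤ r (k + 2) := by
      by_contra h
      exact hnr2 (r (k + 2)) hk12 (by omega) hrk2
    have hbet := between_on a n m hs (r (k + 1)) (r (k + 2)) f
      (by have := hrk1.1; omega) (le_of_lt hrk2.2.1)
      (by exact hnoB (k + 1) (by omega) (by omega))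
      (le_of_lt hrf) hfr2
    rw [haf] at hbet
    -- hbet : Between (a (r k)) (a (r (k+1))) (a (r (k+2)))
    rcases hki with hki | hki
    · rw [hki] at hbet
      unfold Between at hb hbet ⊢; omega
    · rw [hki] at hbet
      unfold Between at hb hbet ⊢; omega
end

section
/- Any functional two-way nondeterministic finite state transducer with N states is N-crossing: for every pair (u,v) in its transduction, there is an accepting run on u with output v whose crossing sequences all have length at most N. -/
/-- A (nondeterministic) two-way finite state transducer over alphabet `A` with
states `Q`: `delta p a v q d` means there is a transition from `p` reading `a`,
outputting `v`, going to state `q` and moving right (`d = true`) or left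
(`d = false`). -/
structure TwoNFT (A Q : Type*) where
  init : Q
  final : Q → Prop
  delta : Q → A → List A → Q → Bool → Prop

/-- The `i`-th letter of `u` (1-based). -/
def letterAt {A : Type*} [Inhabited A] (u : List A) (i : ℕ) : A := u.getD (i - 1) default

/-- `ρ 1, …, ρ m` is a run of `T` on `u`, where `o k` is the output of the `k`-th
transition. Positions are 1-based; the run starts in `(init, 1)`. -/
def IsRun {A Q : Type*} [Inhabited A] (T : TwoNFT A Q) (u : List A) (m : ℕ)
    (ρ : ℕ → Q × ℕ) (o : ℕ → List A) : Prop :=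
  1 ≤ m ∧ ρ 1 = (T.init, 1) ∧ (ρ m).2 ≤ u.length + 1 ∧
  ∀ k, 1 ≤ k → k < m →
    1 ≤ (ρ k).2 ∧ (ρ k).2 ≤ u.length ∧
    ∃ d : Bool, T.delta (ρ k).1 (letterAt u ((ρ k).2)) (o k) (ρ (k + 1)).1 d ∧
      (if d then (ρ (k + 1)).2 = (ρ k).2 + 1 else (ρ k).2 = (ρ (k + 1)).2 + 1)

/-- An accepting run: it ends at position `n + 1` in a final state. -/
def IsAccRun {A Q : Type*} [Inhabited A] (T : TwoNFT A Q) (u : List A) (m : ℕ)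
    (ρ : ℕ → Q × ℕ) (o : ℕ → List A) : Prop :=
  IsRun T u m ρ o ∧ (ρ m).2 = u.length + 1 ∧ T.final (ρ m).1

/-- The output word of a run of length `m`: concatenation of `o 1, …, o (m-1)`. -/
def outWord {A : Type*} (o : ℕ → List A) (m : ℕ) : List A :=
  (((List.range (m - 1)).map fun k => o (k + 1))).flatten

/-- The transduction `R(T)` defined by `T`. -/
def TReal {A Q : Type*} [Inhabited A] (T : TwoNFT A Q) (u v : List A) : Prop :=
  ∃ m ρ o, IsAccRun T u m ρ o ∧ outWord o m = v

/-- `T` is functional. -/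
def Functional {A Q : Type*} [Inhabited A] (T : TwoNFT A Q) : Prop :=
  ∀ u v v', TReal T u v → TReal T u v' → v = v'

/-- The crossing sequence of the run `ρ` (of length `m`) at position `i`. -/
def CS {Q : Type*} (ρ : ℕ → Q × ℕ) (m i : ℕ) : List Q :=
  ((((List.range m).map (· + 1)).filter fun k => (ρ k).2 = i)).map fun k => (ρ k).1

/-! A shortest accepting run on `u` never visits the same configuration twice, since the
loop between two visits could be cut out. So at each position it visits every state at most
once, and by functionality it still produces the output `v`. -/

namespace IsAccRun

variable {A Q : Type*} [Inhabited A] {T : TwoNFT A Q} {u : List A} {m : ℕ}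
  {ρ : ℕ → Q × ℕ} {o : ℕ → List A}

theorem exists_shorter (hacc : IsAccRun T u m ρ o) {k₁ k₂ : ℕ} (h1 : 1 ≤ k₁) (h12 : k₁ < k₂)
    (h2m : k₂ ≤ m) (heq : ρ k₁ = ρ k₂) :
    ∃ ρ' o', IsAccRun T u (m - (k₂ - k₁)) ρ' o' := by
  set s := k₂ - k₁ with hs
  obtain ⟨⟨hm1, hinit, hend, hstep⟩, hpos, hfin⟩ := hacc
  let ρ' : ℕ → Q × ℕ := fun k => if k ≤ k₁ then ρ k else ρ (k + s)
  let o' : ℕ → List A := fun k => if k < k₁ then o k else o (k + s)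
  have hshift : ∀ k, k₁ ≤ k → ρ' k = ρ (k + s) := by
    intro k hk
    by_cases hk' : k ≤ k₁
    · obtain rfl : k = k₁ := by omega
      simp only [ρ', if_pos hk', heq]
      congr 1; omega
    · simp only [ρ', if_neg hk']
  have hlast : ρ' (m - s) = ρ m := by
    rw [hshift _ (by omega)]; congr 1; omega
  refine ⟨ρ', o', ⟨⟨by omega, ?_, hlast ▸ hend, ?_⟩, hlast ▸ hpos, hlast ▸ hfin⟩⟩
  · simpa only [ρ', if_pos h1] using hinit
  · intro k hk1 hkm
    by_cases hk : k < k₁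
    · simp only [ρ', o', if_pos hk.le, if_pos (show k + 1 ≤ k₁ by omega), if_pos hk]
      exact hstep k hk1 (by omega)
    · rw [hshift k (by omega), hshift (k + 1) (by omega), show k + 1 + s = k + s + 1 by omega]
      simp only [o', if_neg hk]
      exact hstep (k + s) (by omega) (by omega)

theorem injOn_of_minimal (hacc : IsAccRun T u m ρ o)
    (hmin : ∀ m' < m, ∀ ρ' o', ¬ IsAccRun T u m' ρ' o') :
    Set.InjOn ρ (Set.Icc 1 m) := by
  have hlt : ∀ k₁ ∈ Set.Icc 1 m, ∀ k₂ ∈ Set.Icc 1 m, k₁ < k₂ → ρ k₁ ≠ ρ k₂ := by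
    rintro k₁ ⟨h1, -⟩ k₂ ⟨-, h2m⟩ h12 heq
    obtain ⟨ρ', o', hacc'⟩ := hacc.exists_shorter h1 h12 h2m heq
    exact hmin _ (by omega) ρ' o' hacc'
  intro k₁ hk₁ k₂ hk₂ heq
  rcases lt_trichotomy k₁ k₂ with h | h | h
  · exact absurd heq (hlt k₁ hk₁ k₂ hk₂ h)
  · exact h
  · exact absurd heq.symm (hlt k₂ hk₂ k₁ hk₁ h)

end IsAccRun

theorem CS_nodup_of_injOn {Q : Type*} {ρ : ℕ → Q × ℕ} {m : ℕ} (hinj : Set.InjOn ρ (Set.Icc 1 m))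
    (i : ℕ) : (CS ρ m i).Nodup := by
  have hmem : ∀ k ∈ ((List.range m).map (· + 1)).filter (fun k => (ρ k).2 = i),
      k ∈ Set.Icc 1 m ∧ (ρ k).2 = i := by
    intro k hk
    simp only [List.mem_filter, List.mem_map, List.mem_range, decide_eq_true_eq] at hk
    obtain ⟨⟨j, hj, rfl⟩, hi⟩ := hk
    exact ⟨⟨by omega, by omega⟩, hi⟩
  refine List.Nodup.map_on ?_ ((List.nodup_range.map (add_left_injective 1)).filter _)
  intro k₁ hk₁ k₂ hk₂ hstate
  obtain ⟨hk₁, hpos₁⟩ := hmem k₁ hk₁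
  obtain ⟨hk₂, hpos₂⟩ := hmem k₂ hk₂
  exact hinj hk₁ hk₂ (Prod.ext hstate (hpos₁.trans hpos₂.symm))

/-- Any functional 2NFT with `N` states is `N`-crossing: every input–output pair is
realized by an accepting run all of whose crossing sequences have length at most `N`. -/
theorem stmt10 {A Q : Type*} [Inhabited A] [Fintype Q] (T : TwoNFT A Q)
    (hf : Functional T) (N : ℕ) (hN : Fintype.card Q = N) :
    ∀ u v, TReal T u v →
      ∃ m ρ o, IsAccRun T u m ρ o ∧ outWord o m = v ∧
        ∀ i, (CS ρ m i).length ≤ N := by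
  classical
  intro u v huv
  have hex : ∃ m ρ o, IsAccRun T u m ρ o :=
    let ⟨m, ρ, o, hacc, _⟩ := huv
    ⟨m, ρ, o, hacc⟩
  obtain ⟨ρ, o, hacc⟩ := Nat.find_spec hex
  have hinj : Set.InjOn ρ (Set.Icc 1 (Nat.find hex)) :=
    hacc.injOn_of_minimal fun m' hm' ρ' o' hacc' => Nat.find_min hex hm' ⟨ρ', o', hacc'⟩
  refine ⟨_, ρ, o, hacc, hf u _ v ⟨_, ρ, o, hacc, rfl⟩ huv, fun i => ?_⟩
  rw [← hN]
  exact (CS_nodup_of_injOn hinj i).length_le_card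
end

section
/- For every 2NFA A with state set Q and states q₁, q₂ ∈ Q, the language M_{q₁,q₂} of words u₂ such that there exist a word u accepted by A, an accepting run ρ of A on u decomposed as ρ₁ (q₁,i₁) ρ₂ (q₂,i₂) ρ₃ with i₁ ≤ i₂ and u₂ = u[i₁..i₂], is a regular language. -/
/-- A nondeterministic two-way finite automaton: `delta p a q d` means a transition
from `p` reading `a` to `q`, moving right (`d = true`) or left (`d = false`). -/
structure TwoNFA (A Q : Type*) where
  init : Q
  final : Q → Prop
  delta : Q → A → Q → Bool → Prop

/-- `ρ 1, …, ρ m` is a run of the 2NFA on `u` (positions are 1-based). -/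
def IsRunA {A Q : Type*} [Inhabited A] (M : TwoNFA A Q) (u : List A) (m : ℕ)
    (ρ : ℕ → Q × ℕ) : Prop :=
  1 ≤ m ∧ ρ 1 = (M.init, 1) ∧ (ρ m).2 ≤ u.length + 1 ∧
  ∀ k, 1 ≤ k → k < m →
    1 ≤ (ρ k).2 ∧ (ρ k).2 ≤ u.length ∧
    ∃ d : Bool, M.delta (ρ k).1 (letterAt u ((ρ k).2)) (ρ (k + 1)).1 d ∧
      (if d then (ρ (k + 1)).2 = (ρ k).2 + 1 else (ρ k).2 = (ρ (k + 1)).2 + 1)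

/-- An accepting run ends at position `n + 1` in a final state. -/
def IsAccRunA {A Q : Type*} [Inhabited A] (M : TwoNFA A Q) (u : List A) (m : ℕ)
    (ρ : ℕ → Q × ℕ) : Prop :=
  IsRunA M u m ρ ∧ (ρ m).2 = u.length + 1 ∧ M.final (ρ m).1

/-- The crossing sequence of the run `ρ` (of length `m`) at position `i`. -/
def CSA2NFA {Q : Type*} (ρ : ℕ → Q × ℕ) (m i : ℕ) : List Q :=
  ((((List.range m).map (· + 1)).filter fun k => (ρ k).2 = i)).map fun k => (ρ k).1

/-- The language `M_{q₁,q₂}` of factors `u[i₁..i₂]` of words `u` accepted by the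
2NFA `M` along an accepting run visiting `(q₁, i₁)` and later `(q₂, i₂)` with
`i₁ ≤ i₂`. -/
def Mset {A Q : Type*} [Inhabited A] (M : TwoNFA A Q) (q₁ q₂ : Q) : Set (List A) :=
  { w | ∃ (u : List A) (m : ℕ) (ρ : ℕ → Q × ℕ),
      IsAccRunA M u m ρ ∧
      ∃ k₁ k₂, 1 ≤ k₁ ∧ k₁ ≤ k₂ ∧ k₂ ≤ m ∧
        (ρ k₁).1 = q₁ ∧ (ρ k₂).1 = q₂ ∧ (ρ k₁).2 ≤ (ρ k₂).2 ∧
        w = (u.drop ((ρ k₁).2 - 1)).take ((ρ k₂).2 - (ρ k₁).2 + 1) }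

/-!
Cut a witness run on `u = x w z y` between `v = x w` and `r = z y`, so that the first mark
`(q₁, |x| + 1)` lies in `v` and the second one in `r`. Whatever the run does inside `v` is then
summarized by finitely many data of `v`: the states in which it can first leave `v`, and the pairs
of states in which it can enter `v` from the right and leave it again, each with and without
passing the first mark. So whether `z` completes `w` depends on `w` only through the finite set of
such profiles of `x w` over all left contexts `x`: `M_{q₁,q₂}` has finitely many left quotients and
is regular by the Myhill–Nerode theorem.
-/

namespace TwoNFA

variable {A Q : Type*} [Inhabited A]

def Step (M : TwoNFA A Q) (u : List A) (c c' : Q × ℕ) : Prop :=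
  1 ≤ c.2 ∧ c.2 ≤ u.length ∧ ∃ d : Bool, M.delta c.1 (letterAt u c.2) c'.1 d ∧
    (if d then c'.2 = c.2 + 1 else c.2 = c'.2 + 1)

abbrev Reaches (M : TwoNFA A Q) (u : List A) : Q × ℕ → Q × ℕ → Prop :=
  Relation.ReflTransGen (M.Step u)

variable {M : TwoNFA A Q} {u v r : List A} {c c' d : Q × ℕ}

theorem Step.snd_eq (h : M.Step u c c') : c'.2 = c.2 + 1 ∨ c.2 = c'.2 + 1 := by
  obtain ⟨-, -, d, -, h⟩ := h
  cases d <;> simp only [Bool.false_eq_true, if_false, if_true] at h <;> omega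

theorem Reaches.eq_of_outside (h : M.Reaches u c c') (hc : c.2 = 0 ∨ u.length < c.2) :
    c' = c := by
  rcases Relation.ReflTransGen.cases_head h with rfl | ⟨_, ⟨h₁, h₂, -⟩, -⟩
  · rfl
  · omega

theorem reaches_of_isRunA {m : ℕ} {ρ : ℕ → Q × ℕ} (h : IsRunA M u m ρ) {i j : ℕ}
    (hi : 1 ≤ i) (hij : i ≤ j) (hj : j ≤ m) : M.Reaches u (ρ i) (ρ j) := by
  induction j, hij using Nat.le_induction with
  | base => exact .refl
  | succ j hij ih => exact (ih (by omega)).tail (h.2.2.2 j (by omega) (by omega))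

theorem Reaches.exists_run (h : M.Reaches u c d) {m : ℕ} {ρ : ℕ → Q × ℕ} (hρ : ρ 1 = d)
    (hsteps : ∀ k, 1 ≤ k → k < m → M.Step u (ρ k) (ρ (k + 1))) :
    ∃ (n : ℕ) (ρ' : ℕ → Q × ℕ), ρ' 1 = c ∧ (∀ k, 1 ≤ k → ρ' (n + k) = ρ k) ∧
      ∀ k, 1 ≤ k → k < n + m → M.Step u (ρ' k) (ρ' (k + 1)) := by
  induction h using Relation.ReflTransGen.head_induction_on with
  | refl => exact ⟨0, ρ, hρ, by simp, by simpa using hsteps⟩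
  | @head c e hs _ ih =>
    obtain ⟨n, ρ', h₁, hshift, hsteps'⟩ := ih
    refine ⟨n + 1, fun k => if k ≤ 1 then c else ρ' (k - 1), rfl, fun k hk => ?_,
      fun k hk hkm => ?_⟩
    · simp only [show ¬n + 1 + k ≤ 1 by omega, if_false]
      rw [← hshift k hk]
      congr 1; omega
    · rcases Nat.lt_or_ge 1 k with hk₁ | hk₁
      · simp only [show ¬k ≤ 1 by omega, show ¬k + 1 ≤ 1 by omega, if_false,
          show k + 1 - 1 = k - 1 + 1 by omega]
        exact hsteps' (k - 1) (by omega) (by omega)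
      · obtain rfl : k = 1 := by omega
        simpa [h₁] using hs

theorem mem_Mset_iff {q₁ q₂ : Q} {w : List A} :
    w ∈ Mset M q₁ q₂ ↔ ∃ (u : List A) (f : Q) (i₁ i₂ : ℕ), M.Reaches u (M.init, 1) (q₁, i₁) ∧
      M.Reaches u (q₁, i₁) (q₂, i₂) ∧ M.Reaches u (q₂, i₂) (f, u.length + 1) ∧ M.final f ∧
      i₁ ≤ i₂ ∧ w = (u.drop (i₁ - 1)).take (i₂ - i₁ + 1) := by
  constructor
  · rintro ⟨u, m, ρ, ⟨hρ, hend, hf⟩, k₁, k₂, hk₁, hk₁₂, hk₂, rfl, rfl, hi, rfl⟩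
    refine ⟨u, (ρ m).1, (ρ k₁).2, (ρ k₂).2, ?_, reaches_of_isRunA hρ hk₁ hk₁₂ hk₂, ?_, hf, hi, rfl⟩
    · simpa [hρ.2.1] using reaches_of_isRunA hρ le_rfl hk₁ (hk₁₂.trans hk₂)
    · simpa [← hend] using reaches_of_isRunA hρ (hk₁.trans hk₁₂) hk₂ le_rfl
  · rintro ⟨u, f, i₁, i₂, hA, hB, hC, hf, hi, rfl⟩
    obtain ⟨n₃, ρ₃, h₃, hs₃, hst₃⟩ :=
      Reaches.exists_run hC (m := 1) (ρ := fun _ => (f, u.length + 1)) rfl (by omega)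
    obtain ⟨n₂, ρ₂, h₂, hs₂, hst₂⟩ := Reaches.exists_run hB h₃ hst₃
    obtain ⟨n₁, ρ₁, h₁, hs₁, hst₁⟩ := Reaches.exists_run hA h₂ hst₂
    have hend : ρ₁ (n₁ + (n₂ + (n₃ + 1))) = (f, u.length + 1) := by
      rw [hs₁ _ (by omega), hs₂ _ (by omega), hs₃ _ le_rfl]
    refine ⟨u, n₁ + (n₂ + (n₃ + 1)), ρ₁, ⟨⟨by omega, h₁, by simp [hend], hst₁⟩, by simp [hend],
      by simpa [hend] using hf⟩, n₁ + 1, n₁ + (n₂ + 1), by omega, by omega, by omega, ?_⟩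
    rw [hs₁ _ le_rfl, hs₁ _ (by omega), h₂, hs₂ _ le_rfl, h₃]
    exact ⟨rfl, rfl, hi, rfl⟩

theorem letterAt_append_of_le {i : ℕ} (h₁ : 1 ≤ i) (h : i ≤ v.length) :
    letterAt (v ++ r) i = letterAt v i :=
  List.getD_append _ _ _ _ (by omega)

theorem letterAt_append_add {j : ℕ} (hj : 1 ≤ j) :
    letterAt (v ++ r) (v.length + j) = letterAt r j := by
  unfold letterAt
  rw [List.getD_append_right _ _ _ _ (by omega)]
  congr 1
  omega

theorem Step.append_right (h : M.Step v c c') : M.Step (v ++ r) c c' := by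
  obtain ⟨h₁, h₂, d, hd, hmove⟩ := h
  exact ⟨h₁, by simp only [List.length_append]; omega, d,
    by rwa [letterAt_append_of_le h₁ h₂], hmove⟩

theorem Reaches.append_right (h : M.Reaches v c c') : M.Reaches (v ++ r) c c' :=
  Relation.ReflTransGen.mono (fun _ _ => Step.append_right) _ _ h

theorem Step.of_append_right (h : M.Step (v ++ r) c c') (hc : c.2 ≤ v.length) :
    M.Step v c c' := by
  obtain ⟨h₁, -, d, hd, hmove⟩ := h
  exact ⟨h₁, hc, d, by rwa [letterAt_append_of_le h₁ hc] at hd, hmove⟩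

theorem Step.append_left (h : M.Step r c c') :
    M.Step (v ++ r) (c.1, v.length + c.2) (c'.1, v.length + c'.2) := by
  obtain ⟨h₁, h₂, d, hd, hmove⟩ := h
  refine ⟨by omega, by simp only [List.length_append]; omega, d,
    by rwa [letterAt_append_add h₁], ?_⟩
  cases d <;> simp only [if_true, Bool.false_eq_true, if_false] at hmove ⊢ <;> omega

theorem Step.of_append_left (h : M.Step (v ++ r) c c') (hc : v.length < c.2) :
    M.Step r (c.1, c.2 - v.length) (c'.1, c'.2 - v.length) := by
  obtain ⟨-, h₂, d, hd, hmove⟩ := h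
  rw [show c.2 = v.length + (c.2 - v.length) by omega, letterAt_append_add (by omega)] at hd
  refine ⟨by omega, by simp only [List.length_append] at h₂; omega, d, hd, ?_⟩
  cases d <;> simp only [if_true, Bool.false_eq_true, if_false] at hmove ⊢ <;> omega

variable (M) in
/-- A step of `M` on the right part `r` of a word `v ++ r`, in coordinates relative to `r`, where
`R` summarizes the excursions into `v`: `(g, p) ∈ R` when `M` can enter `v` at its last letter in
state `g` and come back to the first letter of `r` in state `p`. -/
def SummaryStep (R : Set (Q × Q)) (r : List A) (c c' : Q × ℕ) : Prop :=
  M.Step r c c' ∧ 1 ≤ c'.2 ∨ c'.2 = 1 ∧ ∃ g, M.Step r c (g, 0) ∧ (g, c'.1) ∈ R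

variable (M) in
abbrev SummaryReaches (R : Set (Q × Q)) (r : List A) : Q × ℕ → Q × ℕ → Prop :=
  Relation.ReflTransGen (M.SummaryStep R r)

variable (M) in
def returns (v : List A) : Set (Q × Q) :=
  {e | M.Reaches v (e.1, v.length) (e.2, v.length + 1)}

theorem SummaryReaches.append_left (h : M.SummaryReaches (M.returns v) r c c') :
    M.Reaches (v ++ r) (c.1, v.length + c.2) (c'.1, v.length + c'.2) := by
  induction h with
  | refl => exact .refl
  | tail _ hs ih =>
    rcases hs with ⟨hs, -⟩ | ⟨hpos, g, hs, hg⟩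
    · exact ih.tail hs.append_left
    · rw [hpos]
      exact ih.trans (.head hs.append_left (Reaches.append_right hg))

theorem Reaches.summarize (h : M.Reaches (v ++ r) c c') (hc' : v.length < c'.2) :
    (v.length < c.2 →
      M.SummaryReaches (M.returns v) r (c.1, c.2 - v.length) (c'.1, c'.2 - v.length)) ∧
    (c.2 ≤ v.length → ∃ p, M.Reaches v c (p, v.length + 1) ∧
      M.SummaryReaches (M.returns v) r (p, 1) (c'.1, c'.2 - v.length)) := by
  induction h using Relation.ReflTransGen.head_induction_on with
  | refl => exact ⟨fun _ => .refl, by omega⟩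
  | @head c d hs _ ih =>
    obtain ⟨ih₁, ih₂⟩ := ih
    have hmove := hs.snd_eq
    rcases c with ⟨p, i⟩
    rcases d with ⟨q, j⟩
    simp only at hmove ih₁ ih₂ ⊢
    refine ⟨fun hi => ?_, fun hi => ?_⟩
    · by_cases hj : v.length < j
      · exact .head (Or.inl ⟨hs.of_append_left hi, by dsimp only; omega⟩) (ih₁ hj)
      · obtain ⟨p', hv, hp'⟩ := ih₂ (by omega)
        obtain rfl : j = v.length := by omega
        exact .head (b := (p', 1))
          (Or.inr ⟨rfl, q, by simpa using hs.of_append_left hi, hv⟩) hp'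
    · by_cases hj : v.length < j
      · obtain rfl : j = v.length + 1 := by omega
        exact ⟨q, .single (hs.of_append_right hi), by simpa using ih₁ hj⟩
      · obtain ⟨p', hv, hp'⟩ := ih₂ (by omega)
        exact ⟨p', .head (hs.of_append_right hi) hv, hp'⟩

theorem Reaches.summarize_left (h : M.Reaches (v ++ r) c c') (hc' : c'.2 ≤ v.length) :
    M.Reaches v c c' ∨ ∃ g' g, M.Reaches (v ++ r) c (g', v.length + 1) ∧
      M.Step r (g', 1) (g, 0) ∧ M.Reaches v (g, v.length) c' := by
  induction h using Relation.ReflTransGen.head_induction_on with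
  | refl => exact .inl .refl
  | @head c d hs _ ih =>
    rcases ih with hv | ⟨g', g, hr, hstep, hv⟩
    · by_cases hc : c.2 ≤ v.length
      · exact .inl (.head (hs.of_append_right hc) hv)
      · have hd : d.2 ≤ v.length := by
          by_contra hd
          have := congrArg Prod.snd (Reaches.eq_of_outside hv (.inr (by omega)))
          omega
        have hmove := hs.snd_eq
        rcases c with ⟨p, i⟩
        rcases d with ⟨q, j⟩
        simp only at hc hd hmove
        obtain rfl : i = v.length + 1 := by omega
        obtain rfl : j = v.length := by omega
        exact .inr ⟨p, q, .refl, by simpa using hs.of_append_left (by simp), hv⟩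
    · exact .inr ⟨g', g, .head hs hr, hstep, hv⟩

/-- What a run on `v ++ r` can observe of the left part `v` carrying a marked configuration: the
states in which it first leaves `v`, and the excursions into `v` from the right, each with and
without visiting the mark. -/
structure Profile (Q : Type*) where
  exits : Set Q
  exitsVia : Set Q
  returns : Set (Q × Q)
  returnsVia : Set (Q × Q)

instance [Finite Q] : Finite (Profile Q) :=
  Finite.of_injective (fun P : Profile Q => (P.exits, P.exitsVia, P.returns, P.returnsVia))
    fun ⟨_, _, _, _⟩ ⟨_, _, _, _⟩ h => by simpa using h

variable (M) in
def profile (v : List A) (m : Q × ℕ) : Profile Q where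
  exits := {p | M.Reaches v (M.init, 1) (p, v.length + 1)}
  exitsVia := {p | M.Reaches v (M.init, 1) m ∧ M.Reaches v m (p, v.length + 1)}
  returns := M.returns v
  returnsVia := {e | M.Reaches v (e.1, v.length) m ∧ M.Reaches v m (e.2, v.length + 1)}

@[simp]
theorem profile_returns (v : List A) (m : Q × ℕ) : (M.profile v m).returns = M.returns v := rfl

variable (M) in
/-- `p` is a state in which a run from the initial configuration can leave the left part for the
first time after visiting the mark there. -/
def Enters (P : Profile Q) (r : List A) (p : Q) : Prop :=
  p ∈ P.exitsVia ∨ ∃ p₀ ∈ P.exits, ∃ g' g, M.SummaryReaches P.returns r (p₀, 1) (g', 1) ∧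
    M.Step r (g', 1) (g, 0) ∧ (g, p) ∈ P.returnsVia

theorem exists_enters_of_reaches {m : Q × ℕ} (hm₁ : 1 ≤ m.2) (hm : m.2 ≤ v.length)
    (h₁ : M.Reaches (v ++ r) (M.init, 1) m) (h₂ : M.Reaches (v ++ r) m c)
    (hc : v.length < c.2) :
    ∃ p, M.Enters (M.profile v m) r p ∧
      M.SummaryReaches (M.returns v) r (p, 1) (c.1, c.2 - v.length) := by
  obtain ⟨p, hvia, hp⟩ := (Reaches.summarize h₂ hc).2 hm
  refine ⟨p, ?_, hp⟩
  rcases Reaches.summarize_left h₁ hm with hv | ⟨g', g, hr, hstep, hv⟩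
  · exact .inl ⟨hv, hvia⟩
  · obtain ⟨p₀, hp₀, hr⟩ := (Reaches.summarize hr (by simp)).2 (by dsimp only; omega)
    simp only [Nat.add_sub_cancel_left] at hr
    exact .inr ⟨p₀, hp₀, g', g, hr, hstep, hv, hvia⟩

theorem reaches_of_enters {m : Q × ℕ} {p : Q} (he : M.Enters (M.profile v m) r p)
    (h : M.SummaryReaches (M.returns v) r (p, 1) c) :
    M.Reaches (v ++ r) (M.init, 1) m ∧ M.Reaches (v ++ r) m (c.1, v.length + c.2) := by
  have hc := SummaryReaches.append_left h
  rcases he with ⟨h₁, h₂⟩ | ⟨p₀, hp₀, g', g, hr, hstep, h₁, h₂⟩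
  · exact ⟨Reaches.append_right h₁, (Reaches.append_right h₂).trans hc⟩
  · refine ⟨?_, (Reaches.append_right h₂).trans hc⟩
    exact (Reaches.append_right hp₀).trans <| (SummaryReaches.append_left hr).trans <|
      .head hstep.append_left (Reaches.append_right h₁)

variable (M) in
/-- The second mark is at position `j` of `z ++ y`: the last letter of `z`, or the end of the
word when the witness ends with `z`. -/
def continuations (q₂ : Q) (P : Profile Q) : Language A :=
  {z | ∃ y f p j, M.final f ∧ (j = z.length ∨ j = z.length + 1 ∧ y = []) ∧
    M.Enters P (z ++ y) p ∧ M.SummaryReaches P.returns (z ++ y) (p, 1) (q₂, j) ∧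
    M.SummaryReaches P.returns (z ++ y) (q₂, j) (f, (z ++ y).length + 1)}

theorem _root_.List.exists_eq_append_of_eq_take_drop {α : Type*} {u w : List α} {i k : ℕ}
    (hw : w = (u.drop i).take k) :
    ∃ x y, u = x ++ w ++ y ∧ x.length = min i u.length ∧ (w.length = k ∨ y = []) := by
  refine ⟨u.take i, (u.drop i).drop k, by rw [hw, List.append_assoc, List.take_append_drop,
    List.take_append_drop], by simp, ?_⟩
  rw [hw]
  by_cases hk : k ≤ u.length - i
  · exact .inl (by simp [hk])
  · exact .inr (by simp only [List.drop_eq_nil_iff, List.length_drop]; omega)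

theorem append_mem_Mset_iff {q₁ q₂ : Q} {w z : List A} (hw : w ≠ []) (hz : z ≠ []) :
    w ++ z ∈ Mset M q₁ q₂ ↔
      ∃ x, z ∈ M.continuations q₂ (M.profile (x ++ w) (q₁, x.length + 1)) := by
  have hw₁ := List.length_pos_iff.mpr hw
  have hz₁ := List.length_pos_iff.mpr hz
  rw [mem_Mset_iff]
  constructor
  · rintro ⟨u, f, i₁, i₂, hA, hB, hC, hf, hi, hwz⟩
    have hi₁ : 1 ≤ i₁ := by
      by_contra
      have := congrArg Prod.snd (Reaches.eq_of_outside (hB.trans hC) (.inl (by omega)))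
      simp only at this
      omega
    have hi₂ : i₂ ≤ u.length + 1 := by
      by_contra
      have := congrArg Prod.snd (Reaches.eq_of_outside hC (.inr (by omega)))
      simp only at this
      omega
    have hlen := congrArg List.length hwz
    obtain ⟨x, y, rfl, hx, hcase⟩ := List.exists_eq_append_of_eq_take_drop hwz
    simp only [List.length_append, List.length_take, List.length_drop] at hx hlen hi₂
    obtain rfl : i₁ = x.length + 1 := by omega
    rw [show x ++ (w ++ z) ++ y = x ++ w ++ (z ++ y) by simp] at hA hB hC
    obtain ⟨p, he, hp⟩ := exists_enters_of_reaches (by simp)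
      (by simp only [List.length_append]; omega) hA hB (by simp only [List.length_append]; omega)
    have hend := (Reaches.summarize hC (by simp)).1 (by simp only [List.length_append]; omega)
    rw [show (x ++ w ++ (z ++ y)).length + 1 - (x ++ w).length = (z ++ y).length + 1 by
      simp only [List.length_append]; omega] at hend
    refine ⟨x, y, f, p, i₂ - (x ++ w).length, hf, ?_, he, hp, by simpa using hend⟩
    rcases hcase with hk | rfl
    · left
      simp only [List.length_append] at hk ⊢
      omega
    · simp only [List.length_append, List.length_nil, and_true] at hlen hi₂ ⊢
      omega
  · rintro ⟨x, y, f, p, j, hf, hj, he, h₁, h₂⟩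
    obtain ⟨hA, hB⟩ := reaches_of_enters he h₁
    have hC := SummaryReaches.append_left h₂
    refine ⟨x ++ w ++ (z ++ y), f, x.length + 1, (x ++ w).length + j, hA, hB, ?_, hf,
      by simp only [List.length_append]; omega, ?_⟩
    · simpa [Nat.add_assoc] using hC
    · have hdrop : (x ++ w ++ (z ++ y)).drop (x.length + 1 - 1) = w ++ z ++ y := by simp
      rw [hdrop]
      rcases hj with rfl | ⟨rfl, rfl⟩
      · rw [List.take_left' (by simp only [List.length_append]; omega)]
      · rw [List.append_nil, List.take_of_length_le (by simp only [List.length_append]; omega)]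

variable (M) in
theorem finite_range_leftQuotient_Mset [Finite Q] (q₁ q₂ : Q) :
    (Set.range (Language.leftQuotient (Mset M q₁ q₂))).Finite := by
  let quotientOf : Set (Profile Q) × Prop → Set (List A) := fun ⟨S, b⟩ =>
    {z | z = [] ∧ b ∨ z ≠ [] ∧ ∃ P ∈ S, z ∈ M.continuations q₂ P}
  refine ((Set.finite_range quotientOf).insert (Mset M q₁ q₂)).subset ?_
  rintro _ ⟨w, rfl⟩
  rcases eq_or_ne w [] with rfl | hw
  · exact .inl rfl
  refine .inr ⟨(Set.range fun x => M.profile (x ++ w) (q₁, x.length + 1), w ∈ Mset M q₁ q₂), ?_⟩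
  ext z
  change _ ↔ w ++ z ∈ Mset M q₁ q₂
  rcases eq_or_ne z [] with rfl | hz
  · simp [quotientOf]
  · simp [quotientOf, hz, append_mem_Mset_iff hw hz]

end TwoNFA

/-- For every 2NFA `M` and states `q₁, q₂`, the language `M_{q₁,q₂}` is regular. -/
theorem stmt13 {A Q : Type*} [Inhabited A] [Fintype Q] (M : TwoNFA A Q) (q₁ q₂ : Q) :
    ∃ (σ : Type) (_ : Fintype σ) (D : DFA A σ), D.accepts = Mset M q₁ q₂ :=
  Language.IsRegular.of_finite_range_leftQuotient (M.finite_range_leftQuotient_Mset q₁ q₂)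
end
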